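/- Let F be the St. Petersburg distribution function. Then limsup_{x→∞} (1 - F*F(x))/(1 - F(x)) = 4 and liminf_{x→∞} (1 - F*F(x))/(1 - F(x)) = 2, where F*F denotes the distribution function of the sum of two independent copies. In particular F is O-subexponential but not subexponential. -/

import Mathlib

/-!
The law of `F` has an atom of mass `2⁻ᵏ` at each `2ᵏ`, `k ≥ 1`, and nothing else. For
`2^(m+1) ≤ x < 2^(m+2)` two atoms add up to at most `x` iff both are at most `2^m`, or one of them
is `2^(m+1)` and the other at most `x - 2^(m+1)`. Hence
`F*F(x) = (1 - 2⁻ᵐ)² + 2⁻ᵐ F(x - 2^(m+1))`, and as `1 - F(x) = 2^(-(m+1))` the ratio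
`(1 - F*F(x)) / (1 - F(x))` equals `4 - 2 * 2⁻ᵐ - 2 F(x - 2^(m+1))`, which lies in `[2, 4]`.
It tends to `4` along `x = 2^(m+1)` and equals `2` at `x = 3 * 2^m`.
-/

open MeasureTheory ProbabilityTheory Real Filter

/-- The St. Petersburg distribution function. -/
noncomputable def stPetersburgCDF (x : ℝ) : ℝ :=
  if x < 2 then 0 else 1 - (2 : ℝ) ^ (Int.fract (logb 2 x)) / x

open Set Function Topology

lemma stPetersburgCDF_of_lt_two {x : ℝ} (hx : x < 2) : stPetersburgCDF x = 0 := by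
  simp [stPetersburgCDF, hx]

lemma stPetersburgCDF_of_mem_Ico (n : ℕ) {x : ℝ} (hx : x ∈ Ico ((2 : ℝ) ^ n) (2 ^ (n + 1))) :
    stPetersburgCDF x = 1 - ((2 : ℝ) ^ n)⁻¹ := by
  obtain ⟨hnx, hxn⟩ := hx
  rcases Nat.eq_zero_or_pos n with rfl | hn
  · rw [stPetersburgCDF_of_lt_two (by simpa using hxn)]
    norm_num
  have hx2 : 2 ≤ x := le_trans (by simpa using pow_le_pow_right₀ one_le_two hn) hnx
  have hx0 : 0 < x := by linarith
  have hfloor : ⌊logb 2 x⌋ = n := by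
    rw [Int.floor_eq_iff, Int.cast_natCast, le_logb_iff_rpow_le one_lt_two hx0,
      logb_lt_iff_lt_rpow one_lt_two hx0, ← Nat.cast_succ, rpow_natCast, rpow_natCast]
    exact ⟨hnx, hxn⟩
  have hfract : (2 : ℝ) ^ Int.fract (logb 2 x) = x / 2 ^ n := by
    rw [Int.fract, hfloor, Int.cast_natCast, rpow_sub two_pos, rpow_logb two_pos (by norm_num) hx0,
      rpow_natCast]
  rw [stPetersburgCDF, if_neg hx2.not_gt, hfract]
  field_simp

lemma stPetersburgCDF_nonneg (x : ℝ) : 0 ≤ stPetersburgCDF x := by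
  rcases lt_or_ge x 1 with hx | hx
  · rw [stPetersburgCDF_of_lt_two (by linarith)]
  obtain ⟨n, hn⟩ := exists_nat_pow_near hx one_lt_two
  rw [stPetersburgCDF_of_mem_Ico n hn, sub_nonneg]
  exact inv_le_one_of_one_le₀ (one_le_pow₀ one_le_two)

lemma stPetersburgCDF_le_of_lt_two_pow (m : ℕ) {x : ℝ} (hx : x < 2 ^ (m + 1)) :
    stPetersburgCDF x ≤ 1 - ((2 : ℝ) ^ m)⁻¹ := by
  have hm : ((2 : ℝ) ^ m)⁻¹ ≤ 1 := inv_le_one_of_one_le₀ (one_le_pow₀ one_le_two)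
  rcases lt_or_ge x 1 with hx1 | hx1
  · rw [stPetersburgCDF_of_lt_two (by linarith)]
    linarith
  obtain ⟨n, hn⟩ := exists_nat_pow_near hx1 one_lt_two
  have hnm : n ≤ m := by
    by_contra! h
    exact (hn.1.trans_lt hx).not_ge (pow_le_pow_right₀ one_le_two h)
  rw [stPetersburgCDF_of_mem_Ico n hn]
  gcongr
  exact one_le_two

lemma leftLim_eq_of_forall_mem_Ico {f : ℝ → ℝ} {a b : ℝ} (hab : a < b)
    (h : ∀ x ∈ Ico a b, f x = f a) : leftLim f b = f a :=
  leftLim_eq_of_tendsto <| tendsto_const_nhds.congr' <|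
    eventually_of_mem (Ioo_mem_nhdsLT hab) fun x hx ↦ (h x (Ioo_subset_Ico_self hx)).symm

section CDF

variable {μ : Measure ℝ} [IsProbabilityMeasure μ] {a b : ℝ}

lemma measure_Ioo_eq_zero_of_cdf_eq (hab : a < b) (h : ∀ x ∈ Ico a b, cdf μ x = cdf μ a) :
    μ (Ioo a b) = 0 := by
  rw [← measure_cdf μ, StieltjesFunction.measure_Ioo, leftLim_eq_of_forall_mem_Ico hab h, sub_self,
    ENNReal.ofReal_zero]

lemma measureReal_singleton_of_cdf_eq (hab : a < b) (h : ∀ x ∈ Ico a b, cdf μ x = cdf μ a) :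
    μ.real {b} = cdf μ b - cdf μ a := by
  conv_lhs => rw [measureReal_def, ← measure_cdf μ]
  rw [StieltjesFunction.measure_singleton, leftLim_eq_of_forall_mem_Ico hab h,
    ENNReal.toReal_ofReal (sub_nonneg.2 ((cdf μ).mono hab.le))]

end CDF

abbrev stPetersburgAtoms : Set ℝ := range fun k : ℕ ↦ (2 : ℝ) ^ (k + 1)

lemma le_or_eq_of_mem_stPetersburgAtoms {a : ℝ} (ha : a ∈ stPetersburgAtoms)
    (m : ℕ) (h : a < 2 ^ (m + 2)) : a ≤ 2 ^ m ∨ a = 2 ^ (m + 1) := by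
  obtain ⟨k, rfl⟩ := ha
  have hk : k + 1 < m + 2 := (pow_lt_pow_iff_right₀ one_lt_two).1 h
  rcases Nat.lt_or_ge (k + 1) (m + 1) with hkm | hkm
  · exact .inl (pow_le_pow_right₀ one_le_two (by omega))
  · exact .inr (by rw [show k = m by omega])

lemma add_le_iff_of_mem_stPetersburgAtoms {a b x : ℝ} (m : ℕ)
    (ha : a ∈ stPetersburgAtoms) (hb : b ∈ stPetersburgAtoms)
    (hx : x ∈ Ico ((2 : ℝ) ^ (m + 1)) (2 ^ (m + 2))) :
    a + b ≤ x ↔ (a ≤ 2 ^ m ∧ b ≤ 2 ^ m) ∨ (a = 2 ^ (m + 1) ∧ b ≤ x - 2 ^ (m + 1)) ∨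
      (a ≤ x - 2 ^ (m + 1) ∧ b = 2 ^ (m + 1)) := by
  have ha0 : 0 < a := by obtain ⟨k, rfl⟩ := ha; positivity
  have hb0 : 0 < b := by obtain ⟨k, rfl⟩ := hb; positivity
  have hpow : (2 : ℝ) ^ (m + 1) = 2 * 2 ^ m := pow_succ' 2 m
  obtain ⟨hx₁, hx₂⟩ := hx
  constructor
  · intro hab
    rcases le_or_eq_of_mem_stPetersburgAtoms ha m (by linarith) with ha' | ha' <;>
    rcases le_or_eq_of_mem_stPetersburgAtoms hb m (by linarith) with hb' | hb'
    · exact .inl ⟨ha', hb'⟩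
    · exact .inr (.inr ⟨by linarith, hb'⟩)
    · exact .inr (.inl ⟨ha', by linarith⟩)
    · exact .inr (.inl ⟨ha', by linarith⟩)
  · rintro (⟨ha', hb'⟩ | ⟨ha', hb'⟩ | ⟨ha', hb'⟩) <;> linarith

section StPetersburgLaw

variable {μ : Measure ℝ} [IsProbabilityMeasure μ] (hF : cdf μ = stPetersburgCDF)
include hF

lemma ae_mem_stPetersburgAtoms : ∀ᵐ y ∂μ, y ∈ stPetersburgAtoms := by
  have hsub : stPetersburgAtomsᶜ ⊆
      Iic 1 ∪ ⋃ n : ℕ, Ioo ((2 : ℝ) ^ n) (2 ^ (n + 1)) := by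
    intro y hy
    rcases le_or_gt y 1 with hy1 | hy1
    · exact .inl hy1
    obtain ⟨n, hn, hn'⟩ := exists_nat_pow_near hy1.le one_lt_two
    refine .inr (mem_iUnion.2 ⟨n, lt_of_le_of_ne hn ?_, hn'⟩)
    rintro rfl
    cases n with
    | zero => simp at hy1
    | succ k => exact hy ⟨k, rfl⟩
  refine measure_mono_null hsub (measure_union_null ?_ (measure_iUnion_null fun n ↦ ?_))
  · rw [← ofReal_cdf, hF, stPetersburgCDF_of_lt_two one_lt_two, ENNReal.ofReal_zero]
  · refine measure_Ioo_eq_zero_of_cdf_eq (pow_lt_pow_right₀ one_lt_two n.lt_succ_self) ?_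
    intro x hx
    rw [hF, stPetersburgCDF_of_mem_Ico n hx, stPetersburgCDF_of_mem_Ico n
      ⟨le_rfl, pow_lt_pow_right₀ one_lt_two n.lt_succ_self⟩]

lemma measureReal_singleton_two_pow (m : ℕ) :
    μ.real {(2 : ℝ) ^ (m + 1)} = ((2 : ℝ) ^ (m + 1))⁻¹ := by
  have hlt : (2 : ℝ) ^ m < 2 ^ (m + 1) := pow_lt_pow_right₀ one_lt_two m.lt_succ_self
  have hcdf : ∀ x ∈ Ico ((2 : ℝ) ^ m) (2 ^ (m + 1)), cdf μ x = 1 - ((2 : ℝ) ^ m)⁻¹ := by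
    intro x hx
    rw [hF, stPetersburgCDF_of_mem_Ico m hx]
  rw [measureReal_singleton_of_cdf_eq hlt fun x hx ↦ by rw [hcdf x hx, hcdf _ ⟨le_rfl, hlt⟩],
    hcdf _ ⟨le_rfl, hlt⟩, hF, stPetersburgCDF_of_mem_Ico (m + 1)
      ⟨le_rfl, pow_lt_pow_right₀ one_lt_two (m + 1).lt_succ_self⟩, pow_succ]
  ring

lemma conv_real_Iic_eq (m : ℕ) {x : ℝ} (hx : x ∈ Ico ((2 : ℝ) ^ (m + 1)) (2 ^ (m + 2))) :
    (μ ∗ μ).real (Iic x) =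
      (1 - ((2 : ℝ) ^ m)⁻¹) ^ 2 +
        2 * ((2 : ℝ) ^ (m + 1))⁻¹ * stPetersburgCDF (x - 2 ^ (m + 1)) := by
  set c : ℝ := 2 ^ m
  set d : ℝ := 2 ^ (m + 1)
  set t := x - d
  have hcd : c < d := pow_lt_pow_right₀ one_lt_two m.lt_succ_self
  have htd : t < d := by linarith [hx.2, pow_succ' (2 : ℝ) (m + 1)]
  have hsupp := ae_mem_stPetersburgAtoms hF
  have hae : (fun p : ℝ × ℝ ↦ p.1 + p.2) ⁻¹' Iic x =ᵐ[μ.prod μ]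
      (Iic c ×ˢ Iic c ∪ ({d} ×ˢ Iic t ∪ Iic t ×ˢ {d}) : Set (ℝ × ℝ)) := by
    rw [eventuallyEq_set]
    filter_upwards [measurePreserving_fst.quasiMeasurePreserving.ae hsupp,
      measurePreserving_snd.quasiMeasurePreserving.ae hsupp] with p h₁ h₂
    simp only [mem_preimage, mem_union, mem_prod, mem_Iic, mem_singleton_iff]
    exact add_le_iff_of_mem_stPetersburgAtoms m h₁ h₂ hx
  have hdisj₁ : Disjoint (Iic c ×ˢ Iic c) ({d} ×ˢ Iic t ∪ Iic t ×ˢ {d}) :=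
    .union_right (disjoint_prod.2 (.inl (disjoint_singleton_right.2 (notMem_Iic.2 hcd))))
      (disjoint_prod.2 (.inr (disjoint_singleton_right.2 (notMem_Iic.2 hcd))))
  have hdisj₂ : Disjoint ({d} ×ˢ Iic t) (Iic t ×ˢ {d}) :=
    disjoint_prod.2 (.inl (disjoint_singleton_left.2 (notMem_Iic.2 htd)))
  have hIic : ∀ y, μ.real (Iic y) = stPetersburgCDF y := fun y ↦ by rw [← cdf_eq_real, hF]
  rw [Measure.conv, map_measureReal_apply measurable_add measurableSet_Iic, measureReal_congr hae,
    measureReal_union hdisj₁ ((measurableSet_singleton d).prod measurableSet_Iic |>.union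
      (measurableSet_Iic.prod (measurableSet_singleton d))),
    measureReal_union hdisj₂ (measurableSet_Iic.prod (measurableSet_singleton d)),
    measureReal_prod_prod, measureReal_prod_prod, measureReal_prod_prod,
    measureReal_singleton_two_pow hF, hIic, hIic, stPetersburgCDF_of_mem_Ico m ⟨le_rfl, hcd⟩]
  ring

end StPetersburgLaw

section Limits

variable {α ι : Type*} {l : Filter α} {l' : Filter ι} [l'.NeBot] {f : α → ℝ} {u : ι → α} {a b : ℝ}

lemma limsup_eq_of_tendsto_comp (hu : Tendsto u l' l) (hle : ∀ᶠ x in l, f x ≤ a)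
    (hge : ∀ᶠ x in l, b ≤ f x) (hfu : Tendsto (f ∘ u) l' (𝓝 a)) : limsup f l = a := by
  have : l.NeBot := hu.neBot
  refine le_antisymm (limsup_le_of_le (isCoboundedUnder_le_of_eventually_le l hge) hle) ?_
  calc a = limsup f (map u l') := hfu.limsup_eq.symm
    _ ≤ limsup f l := limsup_le_limsup_of_le hu
        (isCoboundedUnder_le_of_eventually_le _ (hu.eventually hge))
        (isBoundedUnder_of_eventually_le hle)

lemma liminf_eq_of_tendsto_comp (hu : Tendsto u l' l) (hge : ∀ᶠ x in l, a ≤ f x)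
    (hle : ∀ᶠ x in l, f x ≤ b) (hfu : Tendsto (f ∘ u) l' (𝓝 a)) : liminf f l = a := by
  have : l.NeBot := hu.neBot
  refine le_antisymm ?_ (le_liminf_of_le (isCoboundedUnder_ge_of_eventually_le l hle) hge)
  calc liminf f l ≤ liminf f (map u l') := liminf_le_liminf_of_le hu
        (isBoundedUnder_of_eventually_ge hge)
        (isCoboundedUnder_ge_of_eventually_le _ (hu.eventually hle))
    _ = a := hfu.liminf_eq

end Limits

noncomputable def convTailRatio (μ : Measure ℝ) (x : ℝ) : ℝ := (1 - cdf (μ ∗ μ) x) / (1 - cdf μ x)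

section TailRatio

variable {μ : Measure ℝ} [IsProbabilityMeasure μ] (hF : cdf μ = stPetersburgCDF)
include hF

lemma convTailRatio_eq (m : ℕ) {x : ℝ} (hx : x ∈ Ico ((2 : ℝ) ^ (m + 1)) (2 ^ (m + 2))) :
    convTailRatio μ x = 4 - 2 * ((2 : ℝ) ^ m)⁻¹ - 2 * stPetersburgCDF (x - 2 ^ (m + 1)) := by
  rw [convTailRatio, cdf_eq_real, conv_real_Iic_eq hF m hx, hF,
    stPetersburgCDF_of_mem_Ico (m + 1) hx]
  field_simp
  ring

lemma convTailRatio_mem_Icc {x : ℝ} (hx : 2 ≤ x) : convTailRatio μ x ∈ Icc 2 4 := by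
  obtain ⟨n, hn, hn'⟩ := exists_nat_pow_near (one_le_two.trans hx) one_lt_two
  cases n with
  | zero => norm_num at hn'; linarith
  | succ m =>
    rw [convTailRatio_eq hF m ⟨hn, hn'⟩]
    have hpos : 0 < ((2 : ℝ) ^ m)⁻¹ := by positivity
    have hle := stPetersburgCDF_le_of_lt_two_pow m (x := x - 2 ^ (m + 1))
      (by linarith [pow_succ' (2 : ℝ) (m + 1)])
    exact ⟨by linarith, by linarith [stPetersburgCDF_nonneg (x - 2 ^ (m + 1))]⟩

lemma convTailRatio_two_pow (m : ℕ) : convTailRatio μ (2 ^ (m + 1)) = 4 - 2 * ((2 : ℝ) ^ m)⁻¹ := by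
  rw [convTailRatio_eq hF m ⟨le_rfl, pow_lt_pow_right₀ one_lt_two (m + 1).lt_succ_self⟩, sub_self,
    stPetersburgCDF_of_lt_two two_pos, mul_zero, sub_zero]

lemma convTailRatio_three_mul_two_pow (m : ℕ) : convTailRatio μ (3 * 2 ^ m) = 2 := by
  have hpos : (0 : ℝ) < 2 ^ m := by positivity
  have hpow : ∀ k, (2 : ℝ) ^ (m + k) = 2 ^ k * 2 ^ m := fun k ↦ by rw [pow_add, mul_comm]
  rw [convTailRatio_eq hF m ⟨by rw [hpow]; linarith, by rw [hpow]; linarith⟩, hpow,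
    show 3 * (2 : ℝ) ^ m - 2 ^ 1 * 2 ^ m = 2 ^ m by ring,
    stPetersburgCDF_of_mem_Ico m ⟨le_rfl, pow_lt_pow_right₀ one_lt_two m.lt_succ_self⟩]
  ring

lemma limsup_convTailRatio : limsup (convTailRatio μ) atTop = 4 := by
  refine limsup_eq_of_tendsto_comp (l' := atTop) (u := fun m : ℕ ↦ (2 : ℝ) ^ (m + 1)) (b := 2) ?_
    ((eventually_ge_atTop 2).mono fun x hx ↦ (convTailRatio_mem_Icc hF hx).2)
    ((eventually_ge_atTop 2).mono fun x hx ↦ (convTailRatio_mem_Icc hF hx).1) ?_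
  · exact (tendsto_pow_atTop_atTop_of_one_lt one_lt_two).comp (tendsto_add_atTop_nat 1)
  · have h : Tendsto (fun m : ℕ ↦ ((2 : ℝ) ^ m)⁻¹) atTop (𝓝 0) := by
      simpa only [inv_pow] using
        tendsto_pow_atTop_nhds_zero_of_lt_one (r := (2 : ℝ)⁻¹) (by norm_num) (by norm_num)
    simpa [Function.comp_def, convTailRatio_two_pow hF] using (h.const_mul 2).const_sub 4

lemma liminf_convTailRatio : liminf (convTailRatio μ) atTop = 2 := by
  refine liminf_eq_of_tendsto_comp (l' := atTop) (u := fun m : ℕ ↦ 3 * (2 : ℝ) ^ m) (b := 4) ?_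
    ((eventually_ge_atTop 2).mono fun x hx ↦ (convTailRatio_mem_Icc hF hx).1)
    ((eventually_ge_atTop 2).mono fun x hx ↦ (convTailRatio_mem_Icc hF hx).2) ?_
  · exact (tendsto_pow_atTop_atTop_of_one_lt one_lt_two).const_mul_atTop three_pos
  · simp only [Function.comp_def, convTailRatio_three_mul_two_pow hF, tendsto_const_nhds]

end TailRatio

lemma cdf_map_eq {Ω : Type*} [MeasurableSpace Ω] {P : Measure Ω} [IsProbabilityMeasure P]
    {X : Ω → ℝ} (hX : Measurable X) {G : ℝ → ℝ} (h : ∀ x, (P {ω | X ω ≤ x}).toReal = G x) :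
    cdf (P.map X) = G := by
  have := Measure.isProbabilityMeasure_map (μ := P) hX.aemeasurable
  exact funext fun x ↦ by rw [cdf_eq_real, map_measureReal_apply hX measurableSet_Iic]; exact h x

theorem stmt_4 {Ω : Type*} [MeasureSpace Ω] [IsProbabilityMeasure (ℙ : Measure Ω)]
    (X₁ X₂ : Ω → ℝ) (hX₁ : Measurable X₁) (hX₂ : Measurable X₂)
    (hind : IndepFun X₁ X₂ ℙ)
    (hcdf₁ : ∀ x : ℝ, (ℙ {ω | X₁ ω ≤ x}).toReal = stPetersburgCDF x)
    (hcdf₂ : ∀ x : ℝ, (ℙ {ω | X₂ ω ≤ x}).toReal = stPetersburgCDF x) :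
    limsup (fun x : ℝ =>
        (1 - (ℙ {ω | X₁ ω + X₂ ω ≤ x}).toReal) / (1 - stPetersburgCDF x)) atTop = 4 ∧
    liminf (fun x : ℝ =>
        (1 - (ℙ {ω | X₁ ω + X₂ ω ≤ x}).toReal) / (1 - stPetersburgCDF x)) atTop = 2 ∧
    ¬ Tendsto (fun x : ℝ =>
        (1 - (ℙ {ω | X₁ ω + X₂ ω ≤ x}).toReal) / (1 - stPetersburgCDF x)) atTop (nhds 2) := by
  set μ := (ℙ : Measure Ω).map X₁
  have := Measure.isProbabilityMeasure_map (μ := ℙ) hX₁.aemeasurable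
  have := Measure.isProbabilityMeasure_map (μ := ℙ) hX₂.aemeasurable
  have hF : cdf μ = stPetersburgCDF := cdf_map_eq hX₁ hcdf₁
  have hlaw : (ℙ : Measure Ω).map X₂ = μ :=
    Measure.eq_of_cdf _ _ <| StieltjesFunction.ext fun x ↦ by rw [cdf_map_eq hX₂ hcdf₂, hF]
  have hratio : (fun x : ℝ ↦ (1 - (ℙ {ω | X₁ ω + X₂ ω ≤ x}).toReal) / (1 - stPetersburgCDF x)) =
      convTailRatio μ := by
    funext x
    rw [convTailRatio, hF, cdf_eq_real]
    nth_rw 2 [← hlaw]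
    rw [← hind.map_add_eq_map_conv_map hX₁ hX₂,
      map_measureReal_apply (hX₁.add hX₂) measurableSet_Iic]
    rfl
  rw [hratio]
  refine ⟨limsup_convTailRatio hF, liminf_convTailRatio hF, fun h ↦ ?_⟩
  exact absurd (h.limsup_eq.symm.trans (limsup_convTailRatio hF)) (by norm_num)
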